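/- Epsilon-removal correctness for a single symbol block: for nonnegative matrices E and M with the Neumann series E* = ∑_{k=0}^∞ E^k convergent, and a string s = σ₁…σ_N over Σ, the sum over all (k₁,…,k_N) ∈ ℕ^N of E^{k₁} M_{σ₁} E^{k₂} M_{σ₂} ⋯ E^{k_N} M_{σ_N} (converging entrywise) equals ∏_{n=1}^N (E* M_{σ_n}). -/

import Mathlib

/-!
Over `ℝ` a summable family in a finite-dimensional space is absolutely summable, so the product
of two such sums is the sum over pairs: `(∑ f) * (∑ g) = ∑_{(i, j)} f i * g j`.
Iterating this over the `N` factors `E* M_{σₙ} = ∑ₖ E^k M_{σₙ}` gives the sum over `ℕ^N`.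
-/

section FiniteDimensional

variable {R : Type*} [NormedRing R] [NormedAlgebra ℝ R] [FiniteDimensional ℝ R]

theorem HasSum.mul_of_finiteDimensional {ι κ : Type*} {f : ι → R} {g : κ → R} {a b : R}
    (hf : HasSum f a) (hg : HasSum g b) :
    HasSum (fun p : ι × κ => f p.1 * g p.2) (a * b) :=
  haveI := FiniteDimensional.complete ℝ R
  hf.mul hg <| summable_mul_of_summable_norm
    (summable_norm_iff.2 hf.summable) (summable_norm_iff.2 hg.summable)

theorem hasSum_list_ofFn_prod {ι : Type*} :
    ∀ {N : ℕ} {f : Fin N → ι → R} {a : Fin N → R}, (∀ n, HasSum (f n) (a n)) →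
      HasSum (fun is : Fin N → ι => (List.ofFn fun n => f n (is n)).prod) (List.ofFn a).prod
  | 0, _, _, _ => by simp
  | _ + 1, _, _, hf => by
    have h := (hf 0).mul_of_finiteDimensional (hasSum_list_ofFn_prod fun n => hf n.succ)
    rw [List.ofFn_succ, List.prod_cons]
    refine (Fin.consEquiv fun _ => ι).hasSum_iff.1 ?_
    simpa [Function.comp_def, List.ofFn_succ] using h

end FiniteDimensional

theorem stmt_11_general {K : ℕ} {A : Type*} (N : ℕ)
    (E : Matrix (Fin K) (Fin K) ℝ) (M : A → Matrix (Fin K) (Fin K) ℝ)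
    (Estar : Matrix (Fin K) (Fin K) ℝ)
    (hstar : HasSum (fun k : ℕ => E ^ k) Estar)
    (s : Fin N → A) :
    HasSum (fun ks : Fin N → ℕ => (List.ofFn fun n => E ^ ks n * M (s n)).prod)
      ((List.ofFn fun n => Estar * M (s n)).prod) :=
  -- `Matrix` carries no norm globally; any submultiplicative one induces the entrywise topology.
  @hasSum_list_ofFn_prod _ Matrix.linftyOpNormedRing Matrix.linftyOpNormedAlgebra _ _ N
    (fun n k => E ^ k * M (s n)) (fun n => Estar * M (s n)) fun n => hstar.mul_right (M (s n))

/-- Epsilon-removal, core computation: the sum over all tuples `(k₁, …, k_N)`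
of `E^{k₁} M_{σ₁} ⋯ E^{k_N} M_{σ_N}` equals `∏ₙ (E* M_{σₙ})`, where
`E* = ∑ₖ E^k`. -/
theorem stmt_11 {K : ℕ} {A : Type*} (N : ℕ)
    (E : Matrix (Fin K) (Fin K) ℝ) (M : A → Matrix (Fin K) (Fin K) ℝ)
    (hE : ∀ i j, 0 ≤ E i j) (hM : ∀ a i j, 0 ≤ M a i j)
    (Estar : Matrix (Fin K) (Fin K) ℝ)
    (hstar : HasSum (fun k : ℕ => E ^ k) Estar)
    (s : Fin N → A) :
    HasSum (fun ks : Fin N → ℕ => (List.ofFn fun n => E ^ ks n * M (s n)).prod)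
      ((List.ofFn fun n => Estar * M (s n)).prod) :=
  stmt_11_general N E M Estar hstar s
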